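/- (Well-definedness of the posterior SUN parameters under the probit affine likelihood, implicit in Lemma 2.) Let n, m, s ≥ 1, Ω ∈ ℝ^{n×n} symmetric positive definite with Ω = D_Ω Ω̄ D_Ω, Δ ∈ ℝ^{n×s}, Γ ∈ ℝ^{s×s} symmetric, W ∈ ℝ^{m×n}, Σ ∈ ℝ^{m×m} symmetric positive definite. Assume M := [[Γ, Δᵀ],[Δ, Ω̄]] is positive definite. Define Δ_p := [Δ, Ω̄ D_Ω Wᵀ] ∈ ℝ^{n×(s+m)} and Γ_p := [[Γ, Δᵀ D_Ω Wᵀ],[W D_Ω Δ, W Ω Wᵀ + Σ]] ∈ ℝ^{(s+m)×(s+m)}. Then the block matrix M_p := [[Γ_p, Δ_pᵀ],[Δ_p, Ω̄]] ∈ ℝ^{(s+m+n)×(s+m+n)} is positive definite; in particular Γ_p and Γ_p − Δ_pᵀ Ω̄⁻¹ Δ_p are positive definite, so the posterior SUN_{n,s+m}(ξ, Ω, Δ_p, γ_p, Γ_p) density of Lemma 2 is well defined. -/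

import Mathlib

open MeasureTheory Matrix

/-- Centered multivariate normal density `φ(z; S)` with covariance `S`. -/
noncomputable def gaussPdf {ι : Type*} [Fintype ι] [DecidableEq ι]
    (S : Matrix ι ι ℝ) (z : ι → ℝ) : ℝ :=
  (2 * Real.pi) ^ (-(Fintype.card ι : ℝ) / 2) * S.det ^ (-(1 : ℝ) / 2) *
    Real.exp (-(1 / 2) * (z ⬝ᵥ (S⁻¹ *ᵥ z)))

/-- Centered multivariate normal CDF `Φ(a; S)` with covariance `S`. -/
noncomputable def gaussCdf {ι : Type*} [Fintype ι] [DecidableEq ι]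
    (S : Matrix ι ι ℝ) (a : ι → ℝ) : ℝ :=
  ∫ u in {u : ι → ℝ | ∀ i, u i ≤ a i}, gaussPdf S u

/-- `D_K`: diagonal matrix with entries `√(K i i)`. -/
noncomputable def dMat {ι : Type*} [Fintype ι] [DecidableEq ι]
    (K : Matrix ι ι ℝ) : Matrix ι ι ℝ :=
  Matrix.diagonal fun i => Real.sqrt (K i i)

/-- `K̄ := D_K⁻¹ K D_K⁻¹`: the correlation matrix associated with `K`. -/
noncomputable def corrMat {ι : Type*} [Fintype ι] [DecidableEq ι]
    (K : Matrix ι ι ℝ) : Matrix ι ι ℝ :=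
  (dMat K)⁻¹ * K * (dMat K)⁻¹

/-- The unified skew-normal density `sun(z; ξ, Ω, Δ, γ, Γ)`. -/
noncomputable def sunPdf {ι κ : Type*} [Fintype ι] [DecidableEq ι] [Fintype κ] [DecidableEq κ]
    (xi : ι → ℝ) (Om : Matrix ι ι ℝ) (De : Matrix ι κ ℝ) (ga : κ → ℝ) (Ga : Matrix κ κ ℝ)
    (z : ι → ℝ) : ℝ :=
  gaussPdf Om (z - xi) *
    gaussCdf (Ga - Deᵀ * (corrMat Om)⁻¹ * De)
      (ga + (Deᵀ * (corrMat Om)⁻¹ * (dMat Om)⁻¹) *ᵥ (z - xi)) /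
    gaussCdf Ga ga

/-!
Since `Ω̄ = D_Ω⁻¹ Ω D_Ω⁻¹` is nonsingular, so is `D_Ω`, hence `Ω = D_Ω Ω̄ D_Ω`. With this, the
Schur complement of `Ω̄` in `M_p` is block diagonal, `diag(Γ - Δᵀ Ω̄⁻¹ Δ, Σ)`, and both blocks
are positive definite: the first is the Schur complement of `Ω̄` in `M`. So `M_p` is positive
definite, and `Γ_p` is a principal block of it.
-/

open scoped ComplexOrder

namespace Matrix

variable {p q : Type*}

theorem PosDef.toBlocks₁₁ {R : Type*} [CommRing R] [PartialOrder R] [StarRing R]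
    {M : Matrix (p ⊕ q) (p ⊕ q) R} (hM : M.PosDef) : M.toBlocks₁₁.PosDef :=
  hM.submatrix Sum.inl_injective

theorem PosDef.toBlocks₂₂ {R : Type*} [CommRing R] [PartialOrder R] [StarRing R]
    {M : Matrix (p ⊕ q) (p ⊕ q) R} (hM : M.PosDef) : M.toBlocks₂₂.PosDef :=
  hM.submatrix Sum.inr_injective

variable [Fintype p] [Fintype q] [DecidableEq p] [DecidableEq q] {𝕜 : Type*} [RCLike 𝕜]

theorem posDef_fromBlocks₂₂_iff (A : Matrix p p 𝕜) (B : Matrix p q 𝕜) {D : Matrix q q 𝕜}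
    (hD : D.PosDef) :
    (fromBlocks A B Bᴴ D).PosDef ↔ (A - B * D⁻¹ * Bᴴ).PosDef := by
  have := hD.isUnit.invertible
  have hdet : (fromBlocks A B Bᴴ D).det = D.det * (A - B * D⁻¹ * Bᴴ).det := by
    rw [det_fromBlocks₂₂, invOf_eq_nonsing_inv]
  constructor
  · intro h
    rw [((PosDef.fromBlocks₂₂ A B hD).mp h.posSemidef).posDef_iff_det_ne_zero]
    exact right_ne_zero_of_mul (hdet ▸ h.det_pos.ne')
  · intro h
    rw [((PosDef.fromBlocks₂₂ A B hD).mpr h.posSemidef).posDef_iff_det_ne_zero, hdet]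
    exact mul_ne_zero hD.det_pos.ne' h.det_pos.ne'

theorem PosDef.fromBlocks_zero {A : Matrix p p 𝕜} {D : Matrix q q 𝕜} (hA : A.PosDef)
    (hD : D.PosDef) : (fromBlocks A 0 0 D).PosDef := by
  simpa using (posDef_fromBlocks₂₂_iff A 0 hD).mpr (by simpa using hA)

theorem fromBlocks_sub_transpose_fromCols_mul_inv_mul_fromCols {R ι κ μ : Type*} [CommRing R]
    [Fintype ι] [DecidableEq ι] [Fintype κ] [Fintype μ] {C D K : Matrix ι ι R}
    (hC : IsUnit C.det) (hCs : C.IsSymm) (hDs : D.IsSymm) (hK : D * C * D = K)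
    (A : Matrix κ κ R) (B : Matrix ι κ R) (W : Matrix μ ι R) (S : Matrix μ μ R) :
    fromBlocks A (Bᵀ * D * Wᵀ) (W * D * B) (W * K * Wᵀ + S) -
        (fromCols B (C * D * Wᵀ))ᵀ * C⁻¹ * fromCols B (C * D * Wᵀ) =
      fromBlocks (A - Bᵀ * C⁻¹ * B) 0 0 S := by
  rw [transpose_fromCols, fromRows_mul, fromRows_mul_fromCols,
    sub_eq_add_neg, fromBlocks_neg, fromBlocks_add, ← hK]
  simp only [transpose_mul, transpose_transpose, hCs.eq, hDs.eq, Matrix.mul_assoc,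
    nonsing_inv_mul_cancel_left _ _ hC, mul_nonsing_inv_cancel_left _ _ hC]
  congr 1 <;> abel

end Matrix

section Correlation

variable {ι : Type*} [Fintype ι] [DecidableEq ι]

theorem isUnit_det_dMat_of_isUnit_det_corrMat {K : Matrix ι ι ℝ} (h : IsUnit (corrMat K).det) :
    IsUnit (dMat K).det := by
  rw [corrMat, Matrix.det_mul, Matrix.det_mul] at h
  exact Matrix.isUnit_nonsing_inv_det_iff.mp (isUnit_of_mul_isUnit_right h)

theorem dMat_mul_corrMat_mul_dMat {K : Matrix ι ι ℝ} (h : IsUnit (dMat K).det) :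
    dMat K * corrMat K * dMat K = K := by
  rw [corrMat, ← Matrix.mul_assoc, ← Matrix.mul_assoc, Matrix.mul_nonsing_inv _ h, Matrix.one_mul,
    Matrix.mul_assoc, Matrix.nonsing_inv_mul _ h, Matrix.mul_one]

end Correlation

theorem sun_probit_affine_posterior_well_defined_general
    {n m s : ℕ}
    (Om : Matrix (Fin n) (Fin n) ℝ)
    (De : Matrix (Fin n) (Fin s) ℝ)
    (Ga : Matrix (Fin s) (Fin s) ℝ)
    (W : Matrix (Fin m) (Fin n) ℝ) (Sg : Matrix (Fin m) (Fin m) ℝ) (hSg : Sg.PosDef)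
    (hM : (Matrix.fromBlocks Ga Deᵀ De (corrMat Om)).PosDef)
    (Dep : Matrix (Fin n) (Fin s ⊕ Fin m) ℝ)
    (Gap : Matrix (Fin s ⊕ Fin m) (Fin s ⊕ Fin m) ℝ)
    (hDep : Dep = Matrix.fromCols De (corrMat Om * dMat Om * Wᵀ))
    (hGap : Gap = Matrix.fromBlocks Ga (Deᵀ * dMat Om * Wᵀ) (W * dMat Om * De)
      (W * Om * Wᵀ + Sg)) :
    (Matrix.fromBlocks Gap Depᵀ Dep (corrMat Om)).PosDef ∧
      Gap.PosDef ∧ (Gap - Depᵀ * (corrMat Om)⁻¹ * Dep).PosDef := by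
  have hOb : (corrMat Om).PosDef := by simpa using hM.toBlocks₂₂
  have hObdet : IsUnit (corrMat Om).det := hOb.det_pos.ne'.isUnit
  have hD := isUnit_det_dMat_of_isUnit_det_corrMat hObdet
  have hSchurEq : Gap - Depᵀ * (corrMat Om)⁻¹ * Dep =
      Matrix.fromBlocks (Ga - Deᵀ * (corrMat Om)⁻¹ * De) 0 0 Sg := by
    subst hGap hDep
    exact Matrix.fromBlocks_sub_transpose_fromCols_mul_inv_mul_fromCols hObdet
      (by simpa using hOb.isHermitian) (Matrix.isSymm_diagonal _) (dMat_mul_corrMat_mul_dMat hD)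
      Ga De W Sg
  have hGaSchur : (Ga - Deᵀ * (corrMat Om)⁻¹ * De).PosDef := by
    simpa using (Matrix.posDef_fromBlocks₂₂_iff Ga Deᵀ hOb).mp (by simpa using hM)
  have hSchur : (Gap - Depᵀ * (corrMat Om)⁻¹ * Dep).PosDef :=
    hSchurEq ▸ hGaSchur.fromBlocks_zero hSg
  have hMp : (Matrix.fromBlocks Gap Depᵀ Dep (corrMat Om)).PosDef := by
    simpa using (Matrix.posDef_fromBlocks₂₂_iff Gap Depᵀ hOb).mpr (by simpa using hSchur)
  exact ⟨hMp, by simpa using hMp.toBlocks₁₁, hSchur⟩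

/-- Well-definedness of the posterior SUN parameters under the probit affine likelihood
(implicit in Lemma 2). -/
theorem sun_probit_affine_posterior_well_defined
    {n m s : ℕ} (hn : 0 < n) (hm : 0 < m) (hs : 0 < s)
    (Om : Matrix (Fin n) (Fin n) ℝ) (hOm : Om.PosDef)
    (De : Matrix (Fin n) (Fin s) ℝ)
    (Ga : Matrix (Fin s) (Fin s) ℝ) (hGa : Ga.IsSymm)
    (W : Matrix (Fin m) (Fin n) ℝ) (Sg : Matrix (Fin m) (Fin m) ℝ) (hSg : Sg.PosDef)
    (hM : (Matrix.fromBlocks Ga Deᵀ De (corrMat Om)).PosDef)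
    (Dep : Matrix (Fin n) (Fin s ⊕ Fin m) ℝ)
    (Gap : Matrix (Fin s ⊕ Fin m) (Fin s ⊕ Fin m) ℝ)
    (hDep : Dep = Matrix.fromCols De (corrMat Om * dMat Om * Wᵀ))
    (hGap : Gap = Matrix.fromBlocks Ga (Deᵀ * dMat Om * Wᵀ) (W * dMat Om * De)
      (W * Om * Wᵀ + Sg)) :
    (Matrix.fromBlocks Gap Depᵀ Dep (corrMat Om)).PosDef ∧
      Gap.PosDef ∧ (Gap - Depᵀ * (corrMat Om)⁻¹ * Dep).PosDef :=
  sun_probit_affine_posterior_well_defined_general Om De Ga W Sg hSg hM Dep Gap hDep hGap
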